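/- (Generalized Lazard's Trick) Let A be an AB5 abelian category, let (X_i, u_{ij} : X_i → X_j)_{i ≤ j ∈ I} and (Y_λ, v_{λμ} : Y_λ → Y_μ)_{λ ≤ μ ∈ Λ} be direct systems in A over directed sets I and Λ, with canonical colimit morphisms u_j : X_j → colim X_i and v_μ : Y_μ → colim Y_λ, and let f : colim X_i → colim Y_λ be a morphism such that for each j ∈ I there is μ = μ(j) ∈ Λ such that f ∘ u_j factors through v_μ. Suppose further that either (1) all the transition morphisms v_{λμ} are monomorphisms, or (2) all the objects X_i are finitely generated. Then there exist a directed set Ω and a direct system of morphisms (g_ω : X_ω → Y_ω)_{ω ∈ Ω} in A such that: (a) each X_ω belongs to {X_i : i ∈ I} and each Y_ω belongs to {Y_λ : λ ∈ Λ}; and (b) the morphism colim g_ω : colim X_ω → colim Y_ω is isomorphic to f in the arrow category of A. -/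

import Mathlib

open CategoryTheory Limits

universe w v u

namespace PaperStmt

variable {C : Type u} [Category.{v} C]

/-- The subcategory (object property) `B` is closed under isomorphisms. -/
def ClosedUnderIso (B : C → Prop) : Prop :=
  ∀ ⦃X Y : C⦄, (X ≅ Y) → B X → B Y

/-- `B` is closed under direct summands (retracts). -/
def ClosedUnderSummands (B : C → Prop) : Prop :=
  ∀ ⦃X Y : C⦄, B X → (∃ (s : Y ⟶ X) (r : X ⟶ Y), s ≫ r = 𝟙 Y) → B Y

/-- `f : X ⟶ A` is a `B`-precover of `A`. -/
def IsPrecover (B : C → Prop) {X A : C} (f : X ⟶ A) : Prop :=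
  B X ∧ ∀ ⦃Y : C⦄, B Y → ∀ g : Y ⟶ A, ∃ h : Y ⟶ X, h ≫ f = g

/-- `B` is a precovering subcategory. -/
def Precovering (B : C → Prop) : Prop :=
  ∀ A : C, ∃ (X : C) (f : X ⟶ A), IsPrecover B f

/-- `f : A ⟶ X` is a `B`-preenvelope of `A`. -/
def IsPreenvelope (B : C → Prop) {A X : C} (f : A ⟶ X) : Prop :=
  B X ∧ ∀ ⦃Y : C⦄, B Y → ∀ g : A ⟶ Y, ∃ h : X ⟶ Y, f ≫ h = g

/-- `B` is a preenveloping subcategory. -/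
def Preenveloping (B : C → Prop) : Prop :=
  ∀ A : C, ∃ (X : C) (f : A ⟶ X), IsPreenvelope B f

/-- `f : X ⟶ A` is a `B`-coreflection of `A`. -/
def IsCoreflection (B : C → Prop) {X A : C} (f : X ⟶ A) : Prop :=
  B X ∧ ∀ ⦃Y : C⦄, B Y → ∀ g : Y ⟶ A, ∃! h : Y ⟶ X, h ≫ f = g

/-- `B` is a coreflective subcategory: the inclusion has a right adjoint. -/
def IsCoreflectiveSub (B : C → Prop) : Prop :=
  (ObjectProperty.ι (B : ObjectProperty C)).IsLeftAdjoint

/-- `B` is a reflective subcategory: the inclusion has a left adjoint. -/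
def IsReflectiveSub (B : C → Prop) : Prop :=
  (ObjectProperty.ι (B : ObjectProperty C)).IsRightAdjoint

section Zero

variable [HasZeroMorphisms C]

/-- `k` is a pseudokernel of `f`. -/
def IsPseudokernel {K X Y : C} (f : X ⟶ Y) (k : K ⟶ X) : Prop :=
  k ≫ f = 0 ∧ ∀ ⦃K' : C⦄ (k' : K' ⟶ X), k' ≫ f = 0 → ∃ t : K' ⟶ K, t ≫ k = k'

/-- `c` is a pseudocokernel of `f`. -/
def IsPseudocokernel {X Y Q : C} (f : X ⟶ Y) (c : Y ⟶ Q) : Prop :=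
  f ≫ c = 0 ∧ ∀ ⦃Q' : C⦄ (c' : Y ⟶ Q'), f ≫ c' = 0 → ∃ t : Q ⟶ Q', c ≫ t = c'

end Zero

/-- `C` has pseudokernels. -/
def HasPseudokernels (C : Type u) [Category.{v} C] [HasZeroMorphisms C] : Prop :=
  ∀ ⦃X Y : C⦄ (f : X ⟶ Y), ∃ (K : C) (k : K ⟶ X), IsPseudokernel f k

/-- `C` has pseudocokernels. -/
def HasPseudocokernels (C : Type u) [Category.{v} C] [HasZeroMorphisms C] : Prop :=
  ∀ ⦃X Y : C⦄ (f : X ⟶ Y), ∃ (Q : C) (c : Y ⟶ Q), IsPseudocokernel f c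

end PaperStmt

namespace PaperStmt

/-- `M` is a finitely generated object: `Hom(M, −)` preserves colimits of direct systems over
directed sets whose transition morphisms are all monomorphisms. -/
def FinGenObj {A : Type u} [Category.{v} A] (M : A) : Prop :=
  ∀ (J : Type v) [Preorder J] [IsDirected J (· ≤ ·)] [Nonempty J] (D : J ⥤ A),
    (∀ ⦃a b : J⦄ (h : a ≤ b), Mono (D.map (homOfLE h))) →
    Nonempty (PreservesColimit D (coyoneda.obj (Opposite.op M)))

/-- A direct system of morphisms of `A`: a functor from a (nonempty) directed set to the
arrow category of `A`. -/
structure DirSysArrow (A : Type u) [Category.{v} A] where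
  idx : Type v
  [pre : Preorder idx]
  [dir : IsDirected idx (· ≤ ·)]
  [nem : Nonempty idx]
  diag : idx ⥤ Arrow A

attribute [instance] DirSysArrow.pre DirSysArrow.dir DirSysArrow.nem

/-!
Take for `Ω` the triples `(i, λ, g)` with `g : X i ⟶ Y λ` and `uᵢ ≫ f = g ≫ v_λ`, where
`(i, λ, g) ≤ (i', λ', g')` when `i ≤ i'`, `λ ≤ λ'` and the square formed by `g`, `g'` and the
transition maps commutes. The projections `Ω → I` and `Ω → Λ` are cofinal, so the colimit of the
`g`'s is `f`. `Ω` is directed because two morphisms `X i ⟶ Y λ` lifting the same morphism to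
`colim Y` agree at some later stage `μ ≥ λ`. If the transition maps of `Y` are monic, so is `v_λ`
(AB5). If `X i` is finitely generated, let `d` be the difference of the two morphisms: the
kernels of `d` followed by the transition maps form a directed system of subobjects of `X i`
whose colimit is `X i`, by exactness of directed colimits and `d ≫ v_λ = 0`; so one of them is
already all of `X i`.
-/

end PaperStmt

instance Set.Ici.isDirectedOrder {Λ : Type*} [Preorder Λ] [IsDirectedOrder Λ] (l : Λ) :
    IsDirectedOrder (Set.Ici l) where
  directed a b := by
    obtain ⟨c, hac, hbc⟩ := directed_of (· ≤ ·) a.1 b.1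
    exact ⟨⟨c, a.2.trans hac⟩, hac, hbc⟩

instance Set.Ici.subtype_functor_final_of_isDirectedOrder {Λ : Type*} [Preorder Λ]
    [IsDirectedOrder Λ] (l : Λ) : (Subtype.mono_coe (· ∈ Set.Ici l)).functor.Final := by
  rw [Monotone.final_functor_iff]
  intro m
  obtain ⟨n, hln, hmn⟩ := directed_of (· ≤ ·) l m
  exact ⟨⟨n, hln⟩, hmn⟩

namespace CategoryTheory

def NatTrans.toArrowFunctor {J C : Type*} [Category J] [Category C] {F G : J ⥤ C}
    (α : F ⟶ G) : J ⥤ Arrow C where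
  obj j := Arrow.mk (α.app j)
  map φ := Arrow.homMk (F.map φ) (G.map φ) (α.naturality φ)

theorem Limits.colimMap_comp_final_colimitIso_hom {Ω I Λ C : Type*} [Category Ω] [Category I]
    [Category Λ] [Category C] {X : I ⥤ C} {Y : Λ ⥤ C} [HasColimit X] [HasColimit Y]
    (F : Ω ⥤ I) (G : Ω ⥤ Λ) [F.Final] [G.Final] [HasColimit (F ⋙ X)] [HasColimit (G ⋙ Y)]
    (α : F ⋙ X ⟶ G ⋙ Y) (f : colimit X ⟶ colimit Y)
    (hα : ∀ ω, α.app ω ≫ colimit.ι Y (G.obj ω) = colimit.ι X (F.obj ω) ≫ f) :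
    colimMap α ≫ (Functor.Final.colimitIso G Y).hom = (Functor.Final.colimitIso F X).hom ≫ f := by
  ext ω
  simp [Functor.Final.colimitIso, hα]

end CategoryTheory

namespace PaperStmt

attribute [local instance] IsFiltered.isConnected

theorem FinGenObj.exists_comp_ι_eq {A : Type u} [Category.{v} A] {M : A} (hM : FinGenObj M)
    {J : Type v} [Preorder J] [IsDirected J (· ≤ ·)] [Nonempty J] (D : J ⥤ A) [HasColimit D]
    (hD : ∀ ⦃a b : J⦄ (h : a ≤ b), Mono (D.map (homOfLE h))) (z : M ⟶ colimit D) :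
    ∃ (j : J) (t : M ⟶ D.obj j), t ≫ colimit.ι D j = z :=
  have := (hM J D hD).some
  Types.jointly_surjective _
    (isColimitOfPreserves (coyoneda.obj (Opposite.op M)) (colimit.isColimit D)) z

theorem mono_kernel_map_of_const {A : Type u} [Category.{v} A] [Abelian A] {J : Type*}
    [Category J] {M : A} {F : J ⥤ A} (g : (Functor.const J).obj M ⟶ F) {a b : J} (φ : a ⟶ b) : Mono ((kernel g).map φ) := by
  have : (kernel g).map φ ≫ (kernel.ι g).app b = (kernel.ι g).app a := by
    simp [(kernel.ι g).naturality]
  exact mono_of_mono_fac this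

section EventuallyZero

variable {A : Type u} [Category.{v} A] [Abelian A] [HasColimits A] [AB5 A]
  {Λ : Type v} [Preorder Λ] [IsDirected Λ (· ≤ ·)] {Y : Λ ⥤ A}

theorem mono_colimit_ι_of_mono_map (hY : ∀ ⦃l m : Λ⦄ (h : l ≤ m), Mono (Y.map (homOfLE h)))
    (l : Λ) : Mono (colimit.ι Y l) := by
  have : Nonempty Λ := ⟨l⟩
  have (l m : Λ) (φ : l ⟶ m) : Mono (Y.map φ) := hY (leOfHom φ)
  exact (colimit.isColimit Y).mono_ι_app_of_isFiltered l

variable (Y) in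
def iciNatTrans {M : A} {l : Λ} (d : M ⟶ Y.obj l) :
    (Functor.const (Set.Ici l)).obj M ⟶ (Subtype.mono_coe (· ∈ Set.Ici l)).functor ⋙ Y where
  app m := d ≫ Y.map (homOfLE m.2)
  naturality _ _ _ := by
    simp only [Functor.const_obj_obj, Functor.comp_obj, Functor.const_obj_map,
      Functor.comp_map, Category.id_comp, Category.assoc, ← Functor.map_comp]
    rfl

/-- Directed colimits being exact, `colimit (kernel (iciNatTrans Y d)) ⟶ M ⟶ colimit Y` is
exact, and its second map is `d ≫ colimit.ι Y l = 0`. -/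
theorem isIso_desc_kernel_iciNatTrans {M : A} {l : Λ} (d : M ⟶ Y.obj l)
    (hd : d ≫ colimit.ι Y l = 0) :
    IsIso (colimit.desc _ (Cocone.mk M (kernel.ι (iciNatTrans Y d)))) := by
  set p := colimit.desc _ (Cocone.mk M (kernel.ι (iciNatTrans Y d)))
  have hp (m : Set.Ici l) : colimit.ι _ m ≫ p = (kernel.ι (iciNatTrans Y d)).app m ≫ 𝟙 M :=
    (colimit.ι_desc _ _).trans (Category.comp_id _).symm
  have : Mono p := colim.map_mono' _ (colimit.isColimit _) (isColimitConstCocone _ M) p hp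
  have : Epi p := (colim.exact_mapShortComplex
    ((ShortComplex.mk _ _ (kernel.condition (iciNatTrans Y d))).exact_of_f_is_kernel
      (kernelIsKernel _))
    (colimit.isColimit _) (isColimitConstCocone _ M)
    ((Functor.Final.isColimitWhiskerEquiv _ _).symm (colimit.isColimit Y)) p
    (d ≫ colimit.ι Y l) hp
    (fun m => (Category.id_comp _).trans
      ((Category.assoc _ _ _).trans (d ≫= colimit.w Y (homOfLE m.2))).symm)).epi_f hd
  exact isIso_of_mono_of_epi p

theorem exists_comp_map_eq_zero_of_finGenObj {M : A} (hM : FinGenObj M) {l : Λ}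
    (d : M ⟶ Y.obj l) (hd : d ≫ colimit.ι Y l = 0) :
    ∃ (m : Λ) (hlm : l ≤ m), d ≫ Y.map (homOfLE hlm) = 0 := by
  have := isIso_desc_kernel_iciNatTrans d hd
  set p := colimit.desc _ (Cocone.mk M (kernel.ι (iciNatTrans Y d)))
  obtain ⟨⟨m, hlm⟩, t, ht⟩ := hM.exists_comp_ι_eq (kernel (iciNatTrans Y d))
    (fun _ _ _ => mono_kernel_map_of_const _ _) (inv p)
  have hsec : t ≫ (kernel.ι (iciNatTrans Y d)).app ⟨m, hlm⟩ = 𝟙 M := by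
    simpa [p] using ht =≫ p
  refine ⟨m, hlm, ?_⟩
  have := t ≫= NatTrans.congr_app (kernel.condition (iciNatTrans Y d)) ⟨m, hlm⟩
  rwa [NatTrans.comp_app, reassoc_of% hsec, NatTrans.app_zero, comp_zero] at this

theorem exists_comp_map_eq_zero_of_comp_ι_eq_zero {M : A}
    (hYM : (∀ ⦃l m : Λ⦄ (h : l ≤ m), Mono (Y.map (homOfLE h))) ∨ FinGenObj M) {l : Λ}
    (d : M ⟶ Y.obj l) (hd : d ≫ colimit.ι Y l = 0) :
    ∃ (m : Λ) (hlm : l ≤ m), d ≫ Y.map (homOfLE hlm) = 0 := by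
  rcases hYM with hY | hM
  · have := mono_colimit_ι_of_mono_map hY l
    refine ⟨l, le_rfl, ?_⟩
    rw [(cancel_mono (colimit.ι Y l)).1 (hd.trans zero_comp.symm), zero_comp]
  · exact exists_comp_map_eq_zero_of_finGenObj hM d hd

theorem exists_comp_map_eq_of_comp_ι_eq {M : A}
    (hYM : (∀ ⦃l m : Λ⦄ (h : l ≤ m), Mono (Y.map (homOfLE h))) ∨ FinGenObj M) {l : Λ}
    (d d' : M ⟶ Y.obj l) (h : d ≫ colimit.ι Y l = d' ≫ colimit.ι Y l) :
    ∃ (m : Λ) (hlm : l ≤ m), d ≫ Y.map (homOfLE hlm) = d' ≫ Y.map (homOfLE hlm) := by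
  obtain ⟨m, hlm, hm⟩ := exists_comp_map_eq_zero_of_comp_ι_eq_zero hYM (d - d')
    (by rw [Preadditive.sub_comp, h, sub_self])
  exact ⟨m, hlm, by rwa [Preadditive.sub_comp, sub_eq_zero] at hm⟩

end EventuallyZero

variable {A : Type u} [Category.{v} A] {I : Type v} [Preorder I] {Λ : Type v} [Preorder Λ]
  (X : I ⥤ A) (Y : Λ ⥤ A) [HasColimit X] [HasColimit Y] (f : colimit X ⟶ colimit Y)

structure LazardIndex : Type v where
  i : I
  l : Λ
  g : X.obj i ⟶ Y.obj l
  w : colimit.ι X i ≫ f = g ≫ colimit.ι Y l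

namespace LazardIndex

variable {X Y f}

instance : Preorder (LazardIndex X Y f) where
  le a b := ∃ (hi : a.i ≤ b.i) (hl : a.l ≤ b.l),
    X.map (homOfLE hi) ≫ b.g = a.g ≫ Y.map (homOfLE hl)
  le_refl a := ⟨le_rfl, le_rfl, by simp⟩
  le_trans a b c := by
    rintro ⟨hi, hl, hab⟩ ⟨hi', hl', hbc⟩
    refine ⟨hi.trans hi', hl.trans hl', ?_⟩
    rw [← homOfLE_comp hi hi', ← homOfLE_comp hl hl', X.map_comp, Y.map_comp,
      Category.assoc, hbc, reassoc_of% hab]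

theorem monotone_i : Monotone (i : LazardIndex X Y f → I) := fun _ _ h => h.fst

theorem monotone_l : Monotone (l : LazardIndex X Y f → Λ) := fun _ _ h => h.snd.fst

variable (X Y f) in
abbrev fst : LazardIndex X Y f ⥤ I := monotone_i.functor

variable (X Y f) in
abbrev snd : LazardIndex X Y f ⥤ Λ := monotone_l.functor

variable (X Y f) in
def natTrans : fst X Y f ⋙ X ⟶ snd X Y f ⋙ Y where
  app a := a.g
  naturality _ _ φ := (leOfHom φ).snd.snd

def mapRight (a : LazardIndex X Y f) {m : Λ} (h : a.l ≤ m) : LazardIndex X Y f :=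
  ⟨a.i, m, a.g ≫ Y.map (homOfLE h), by rw [a.w, Category.assoc, colimit.w]⟩

theorem le_mapRight (a : LazardIndex X Y f) {m : Λ} (h : a.l ≤ m) : a ≤ a.mapRight h :=
  ⟨le_rfl, h, by simp [mapRight]⟩

theorem nonempty [Nonempty I]
    (hfact : ∀ j : I, ∃ (μ : Λ) (g : X.obj j ⟶ Y.obj μ), colimit.ι X j ≫ f = g ≫ colimit.ι Y μ) :
    Nonempty (LazardIndex X Y f) :=
  let ⟨μ, g, w⟩ := hfact (Classical.arbitrary I)
  ⟨⟨_, μ, g, w⟩⟩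

theorem final_fst [IsDirectedOrder (LazardIndex X Y f)]
    (hfact : ∀ j : I, ∃ (μ : Λ) (g : X.obj j ⟶ Y.obj μ), colimit.ι X j ≫ f = g ≫ colimit.ι Y μ) :
    (fst X Y f).Final := by
  rw [Monotone.final_functor_iff]
  intro j
  obtain ⟨μ, g, w⟩ := hfact j
  exact ⟨⟨j, μ, g, w⟩, le_rfl⟩

variable (X Y f) in
theorem final_snd [IsDirectedOrder Λ] [IsDirectedOrder (LazardIndex X Y f)]
    [Nonempty (LazardIndex X Y f)] : (snd X Y f).Final := by
  rw [Monotone.final_functor_iff]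
  intro l
  let a : LazardIndex X Y f := Classical.arbitrary _
  obtain ⟨m, hlm, ham⟩ := directed_of (· ≤ ·) l a.l
  exact ⟨a.mapRight ham, hlm⟩

section Directed

variable [Abelian A] [HasColimits A] [AB5 A] [IsDirectedOrder Λ]

theorem exists_ge_ge_of_i_le
    (hcase : (∀ ⦃l m : Λ⦄ (h : l ≤ m), Mono (Y.map (homOfLE h))) ∨
      (∀ i : I, FinGenObj (X.obj i)))
    {a c : LazardIndex X Y f} (hac : a.i ≤ c.i) : ∃ d, a ≤ d ∧ c ≤ d := by
  obtain ⟨l, hal, hcl⟩ := directed_of (· ≤ ·) a.l c.l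
  -- both morphisms `X a.i ⟶ Y l` lift `colimit.ι X a.i ≫ f`
  obtain ⟨m, hlm, hm⟩ := exists_comp_map_eq_of_comp_ι_eq (hcase.imp_right (· a.i))
    (X.map (homOfLE hac) ≫ c.g ≫ Y.map (homOfLE hcl)) (a.g ≫ Y.map (homOfLE hal))
    (by simp only [Category.assoc, colimit.w, ← c.w, ← a.w, colimit.w_assoc])
  refine ⟨c.mapRight (hcl.trans hlm), ⟨hac, hal.trans hlm, ?_⟩, c.le_mapRight _⟩
  simp only [Category.assoc, ← Functor.map_comp, homOfLE_comp] at hm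
  exact hm

theorem isDirectedOrder [IsDirectedOrder I]
    (hcase : (∀ ⦃l m : Λ⦄ (h : l ≤ m), Mono (Y.map (homOfLE h))) ∨
      (∀ i : I, FinGenObj (X.obj i)))
    (hfact : ∀ j : I, ∃ (μ : Λ) (g : X.obj j ⟶ Y.obj μ), colimit.ι X j ≫ f = g ≫ colimit.ι Y μ) :
    IsDirectedOrder (LazardIndex X Y f) where
  directed a b := by
    obtain ⟨j, haj, hbj⟩ := directed_of (· ≤ ·) a.i b.i
    obtain ⟨μ, g, w⟩ := hfact j
    obtain ⟨c, hac, hc⟩ := exists_ge_ge_of_i_le hcase (c := ⟨j, μ, g, w⟩) haj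
    obtain ⟨d, hbd, hcd⟩ := exists_ge_ge_of_i_le hcase (hbj.trans (monotone_i hc))
    exact ⟨d, hac.trans hcd, hbd⟩

end Directed

end LazardIndex

theorem generalized_lazard_general
    {A : Type u} [Category.{v} A] [Abelian A] [HasColimits A] [AB5 A]
    {I : Type v} [Preorder I] [IsDirected I (· ≤ ·)] [Nonempty I]
    {Λ : Type v} [Preorder Λ] [IsDirected Λ (· ≤ ·)]
    (X : I ⥤ A) (Y : Λ ⥤ A) (f : colimit X ⟶ colimit Y)
    (hfact : ∀ j : I, ∃ (μ : Λ) (g : X.obj j ⟶ Y.obj μ),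
      colimit.ι X j ≫ f = g ≫ colimit.ι Y μ)
    (hcase :
      (∀ ⦃l m : Λ⦄ (h : l ≤ m), Mono (Y.map (homOfLE h))) ∨
      (∀ i : I, FinGenObj (X.obj i))) :
    ∃ s : DirSysArrow A,
      (∀ ω : s.idx, (∃ i : I, (s.diag.obj ω).left = X.obj i) ∧
        (∃ l : Λ, (s.diag.obj ω).right = Y.obj l)) ∧
      ∃ (e₁ : colimit (s.diag ⋙ Arrow.leftFunc) ≅ colimit X)
        (e₂ : colimit (s.diag ⋙ Arrow.rightFunc) ≅ colimit Y),
        colimMap (Functor.whiskerLeft s.diag Arrow.leftToRight) ≫ e₂.hom = e₁.hom ≫ f := by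
  have := LazardIndex.nonempty hfact
  have := LazardIndex.isDirectedOrder hcase hfact
  have := LazardIndex.final_fst hfact
  have := LazardIndex.final_snd X Y f
  exact ⟨{ idx := LazardIndex X Y f, diag := (LazardIndex.natTrans X Y f).toArrowFunctor },
    fun a => ⟨⟨a.i, rfl⟩, ⟨a.l, rfl⟩⟩, Functor.Final.colimitIso _ X, Functor.Final.colimitIso _ Y,
    colimMap_comp_final_colimitIso_hom _ _ _ f fun a => a.w.symm⟩

/-- Proposition 9.13, Generalized Lazard's Trick. -/
theorem generalized_lazard
    {A : Type u} [Category.{v} A] [Abelian A] [HasColimits A] [AB5 A]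
    {I : Type v} [Preorder I] [IsDirected I (· ≤ ·)] [Nonempty I]
    {Λ : Type v} [Preorder Λ] [IsDirected Λ (· ≤ ·)] [Nonempty Λ]
    (X : I ⥤ A) (Y : Λ ⥤ A) (f : colimit X ⟶ colimit Y)
    (hfact : ∀ j : I, ∃ (μ : Λ) (g : X.obj j ⟶ Y.obj μ),
      colimit.ι X j ≫ f = g ≫ colimit.ι Y μ)
    (hcase :
      (∀ ⦃l m : Λ⦄ (h : l ≤ m), Mono (Y.map (homOfLE h))) ∨
      (∀ i : I, FinGenObj (X.obj i))) :
    ∃ s : DirSysArrow A,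
      (∀ ω : s.idx, (∃ i : I, (s.diag.obj ω).left = X.obj i) ∧
        (∃ l : Λ, (s.diag.obj ω).right = Y.obj l)) ∧
      ∃ (e₁ : colimit (s.diag ⋙ Arrow.leftFunc) ≅ colimit X)
        (e₂ : colimit (s.diag ⋙ Arrow.rightFunc) ≅ colimit Y),
        colimMap (Functor.whiskerLeft s.diag Arrow.leftToRight) ≫ e₂.hom = e₁.hom ≫ f :=
  generalized_lazard_general X Y f hfact hcase

end PaperStmt
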